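/- arXiv:1111.7253 — 2 statements merged into one kernel-verified Lean document; each statement's English description precedes it below -/
import Mathlib

section
/- Let Γ be a discrete cocompact subgroup of isometries of ℝⁿ such that ℰ is nonempty and Γ has the reflection property and the midpoint property. Let X, Y, Z ∈ ℰ with Y, Z ∈ 𝔖(X), set Z* = Y + (Z − X), and suppose Γ_{X,Y} = Γ_{X,Z}. Then: (1) every γ ∈ Γ_Y acts on the affine span A of {X, Y, Z} either as the identity or as the point reflection at Y, i.e. for every γ ∈ Γ_Y either γp = p for all p ∈ A, or γp = 2Y − p for all p ∈ A; and (2) Z* ∈ ℰ. -/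
/-!
Isometries of `ℝⁿ` are affine (Mazur–Ulam), so `rotPart γ` is linear, and `x ∈ ℰ` exactly when
the rotational parts of the stabilizer `Γ_x` fix no nonzero vector.

For `y ∈ 𝔖(x)` the reflection property yields `τ ∈ Γ_x` with `τ y = 2x - y`, and `τ^#` is `-1`
on the vectors fixed by `Γ_{x,y}^#`; so `τ` is the point reflection at `x` on every point fixed by
`Γ_{x,y}`. As `Γ_{X,Y} = Γ_{X,Z}` fixes `X`, `Y`, `Z`, this gives (1). For (2), the composite of
such reflections at `Y`, `X` and `Z` fixes `Z* = Y + (Z - X)`, but its rotational part is `-1` on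
every vector fixed by `Γ_{Z*}^#`, so no nonzero vector is fixed by `Γ_{Z*}^#` and `Z* ∈ ℰ`.
-/

open Metric

noncomputable section

/-- The rotational (linear) part of an isometry of Euclidean space,
evaluated at a vector `v`. -/
def rotPart {n : ℕ} (γ : EuclideanSpace ℝ (Fin n) ≃ᵢ EuclideanSpace ℝ (Fin n))
    (v : EuclideanSpace ℝ (Fin n)) : EuclideanSpace ℝ (Fin n) :=
  γ v - γ 0

/-- A subgroup of isometries acts properly discontinuously. -/
def ProperlyDisc {n : ℕ}
    (Γ : Subgroup (EuclideanSpace ℝ (Fin n) ≃ᵢ EuclideanSpace ℝ (Fin n))) : Prop :=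
  ∀ K : Set (EuclideanSpace ℝ (Fin n)), IsCompact K →
    {γ : EuclideanSpace ℝ (Fin n) ≃ᵢ EuclideanSpace ℝ (Fin n) |
      γ ∈ Γ ∧ ((γ '' K) ∩ K).Nonempty}.Finite

/-- A subgroup of isometries acts cocompactly. -/
def CocompactAct {n : ℕ}
    (Γ : Subgroup (EuclideanSpace ℝ (Fin n) ≃ᵢ EuclideanSpace ℝ (Fin n))) : Prop :=
  ∃ K : Set (EuclideanSpace ℝ (Fin n)), IsCompact K ∧ ⋃ γ ∈ Γ, γ '' K = Set.univ

/-- The fixed-point set of a subgroup of isometries. -/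
def FixSet {n : ℕ}
    (H : Subgroup (EuclideanSpace ℝ (Fin n) ≃ᵢ EuclideanSpace ℝ (Fin n))) :
    Set (EuclideanSpace ℝ (Fin n)) :=
  {y | ∀ h ∈ H, h y = y}

/-- `ℰ`: the set of points which are isolated points of the fixed-point set of some
subgroup of `Γ`. -/
def SingSet {n : ℕ}
    (Γ : Subgroup (EuclideanSpace ℝ (Fin n) ≃ᵢ EuclideanSpace ℝ (Fin n))) :
    Set (EuclideanSpace ℝ (Fin n)) :=
  {x | ∃ H, H ≤ Γ ∧ x ∈ FixSet H ∧ ∃ ε > 0, FixSet H ∩ ball x ε = {x}}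

/-- The Voronoi cell of `x` with respect to a set `E`. -/
def Vor {n : ℕ} (E : Set (EuclideanSpace ℝ (Fin n))) (x : EuclideanSpace ℝ (Fin n)) :
    Set (EuclideanSpace ℝ (Fin n)) :=
  {z | ∀ y ∈ E, dist z x ≤ dist z y}

/-- `𝔖(x)`: the set of points `y ∈ ℰ`, `y ≠ x`, whose Voronoi cell meets that of `x`
in a face of dimension `n - 1`. -/
def SS {n : ℕ}
    (Γ : Subgroup (EuclideanSpace ℝ (Fin n) ≃ᵢ EuclideanSpace ℝ (Fin n)))
    (x : EuclideanSpace ℝ (Fin n)) : Set (EuclideanSpace ℝ (Fin n)) :=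
  {y | y ∈ SingSet Γ ∧ y ≠ x ∧
    Module.finrank ℝ
      (affineSpan ℝ (Vor (SingSet Γ) x ∩ Vor (SingSet Γ) y)).direction = n - 1}

/-- `Γ_x^#(v)`: the orbit of the vector `v` under the rotational parts of the
stabilizer of `x` in `Γ`. -/
def rotSet {n : ℕ}
    (Γ : Subgroup (EuclideanSpace ℝ (Fin n) ≃ᵢ EuclideanSpace ℝ (Fin n)))
    (x v : EuclideanSpace ℝ (Fin n)) : Set (EuclideanSpace ℝ (Fin n)) :=
  {w | ∃ γ ∈ Γ, γ x = x ∧ rotPart γ v = w}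

/-- The reflection property. -/
def ReflProp {n : ℕ}
    (Γ : Subgroup (EuclideanSpace ℝ (Fin n) ≃ᵢ EuclideanSpace ℝ (Fin n))) : Prop :=
  ∀ x ∈ SingSet Γ, ∀ y ∈ SS Γ x, rotSet Γ x (x - y) = {x - y, y - x}

/-- The midpoint property. -/
def MidProp {n : ℕ}
    (Γ : Subgroup (EuclideanSpace ℝ (Fin n) ≃ᵢ EuclideanSpace ℝ (Fin n))) : Prop :=
  ∀ x ∈ SingSet Γ, ∀ y ∈ SS Γ x,
    midpoint ℝ x y ∈ Vor (SingSet Γ) x ∩ Vor (SingSet Γ) y ∧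
    ∀ z ∈ SingSet Γ, z ≠ x → z ≠ y → midpoint ℝ x y ∉ Vor (SingSet Γ) z

instance IsometryEquiv.applyMulAction {α : Type*} [PseudoEMetricSpace α] :
    MulAction (α ≃ᵢ α) α where
  smul γ x := γ x
  one_smul _ := rfl
  mul_smul _ _ _ := rfl

theorem IsometryEquiv.inv_apply_eq_of_apply_eq {α : Type*} [PseudoEMetricSpace α]
    {γ : α ≃ᵢ α} {x y : α} (h : γ x = y) : γ⁻¹ y = x :=
  γ.symm_apply_eq.2 h.symm

theorem IsometryEquiv.eqOn_affineSpan {E P : Type*} [NormedAddCommGroup E] [NormedSpace ℝ E]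
    [MetricSpace P] [NormedAddTorsor E P] (γ : P ≃ᵢ P) (f : P →ᵃ[ℝ] P) {s : Set P}
    (h : ∀ p ∈ s, γ p = f p) : ∀ p ∈ affineSpan ℝ s, γ p = f p :=
  fun _ hp => AffineMap.eqOn_affineSpan (f := γ.toRealAffineIsometryEquiv.toAffineMap) h hp

section

variable {n : ℕ}

local notation "𝔼" => EuclideanSpace ℝ (Fin n)

theorem rotPart_eq_toRealLinearIsometryEquiv (γ : 𝔼 ≃ᵢ 𝔼) :
    rotPart γ = γ.toRealLinearIsometryEquiv := by
  funext v
  simp [rotPart]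

theorem rotPart_add (γ : 𝔼 ≃ᵢ 𝔼) (u v : 𝔼) :
    rotPart γ (u + v) = rotPart γ u + rotPart γ v := by
  simp only [rotPart_eq_toRealLinearIsometryEquiv, map_add]

theorem rotPart_neg (γ : 𝔼 ≃ᵢ 𝔼) (v : 𝔼) : rotPart γ (-v) = -rotPart γ v := by
  simp only [rotPart_eq_toRealLinearIsometryEquiv, map_neg]

theorem rotPart_smul (γ : 𝔼 ≃ᵢ 𝔼) (c : ℝ) (v : 𝔼) : rotPart γ (c • v) = c • rotPart γ v := by
  simp only [rotPart_eq_toRealLinearIsometryEquiv, map_smul]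

theorem rotPart_sub (γ : 𝔼 ≃ᵢ 𝔼) (p q : 𝔼) : rotPart γ (p - q) = γ p - γ q := by
  simp only [rotPart_eq_toRealLinearIsometryEquiv, map_sub,
    IsometryEquiv.toRealLinearIsometryEquiv_apply, sub_sub_sub_cancel_right]

theorem apply_add_eq_add_rotPart (γ : 𝔼 ≃ᵢ 𝔼) (p v : 𝔼) : γ (p + v) = γ p + rotPart γ v := by
  rw [← sub_eq_iff_eq_add', ← rotPart_sub, add_sub_cancel_left]

theorem apply_add_sub (γ : 𝔼 ≃ᵢ 𝔼) (a b c : 𝔼) : γ (a + (b - c)) = γ a + (γ b - γ c) := by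
  rw [apply_add_eq_add_rotPart, rotPart_sub]

theorem apply_two_smul_sub_of_apply_eq {γ : 𝔼 ≃ᵢ 𝔼} {x : 𝔼} (hγx : γ x = x) (p : 𝔼) :
    γ ((2 : ℝ) • x - p) = (2 : ℝ) • x - γ p := by
  rw [show (2 : ℝ) • x - p = x + (x - p) by module, apply_add_sub, hγx]
  module

theorem rotPart_mul (γ δ : 𝔼 ≃ᵢ 𝔼) (v : 𝔼) : rotPart (γ * δ) v = rotPart γ (rotPart δ v) := by
  rw [rotPart, IsometryEquiv.mul_apply, IsometryEquiv.mul_apply, ← rotPart_sub]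
  rfl

theorem mem_SS_comm {Γ : Subgroup (𝔼 ≃ᵢ 𝔼)} {x y : 𝔼} (hx : x ∈ SingSet Γ) (hy : y ∈ SS Γ x) :
    x ∈ SS Γ y :=
  ⟨hx, hy.2.1.symm, by rw [Set.inter_comm]; exact hy.2.2⟩

theorem mem_singSet_iff {Γ : Subgroup (𝔼 ≃ᵢ 𝔼)} {x : 𝔼} :
    x ∈ SingSet Γ ↔ ∀ v : 𝔼, (∀ γ ∈ Γ, γ x = x → rotPart γ v = v) → v = 0 := by
  constructor
  · rintro ⟨H, hHΓ, hxH, ε, hε, hball⟩ v hv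
    by_contra hv0
    have hnorm : 0 < ‖v‖ := norm_pos_iff.mpr hv0
    set s := ε / (2 * ‖v‖) with hs_def
    have hs : 0 < s := by positivity
    have hmem : x + s • v ∈ FixSet H ∩ ball x ε := by
      refine ⟨fun h hh => ?_, ?_⟩
      · rw [apply_add_eq_add_rotPart, rotPart_smul, hxH h hh, hv h (hHΓ hh) (hxH h hh)]
      · have hsv : ‖s • v‖ = ε / 2 := by
          rw [norm_smul, Real.norm_of_nonneg hs.le, hs_def]
          field_simp
        rw [mem_ball, dist_eq_norm, add_sub_cancel_left, hsv]
        linarith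
    rw [hball, Set.mem_singleton_iff, add_eq_left, smul_eq_zero] at hmem
    exact hmem.elim hs.ne' hv0
  · intro h
    refine ⟨Γ ⊓ MulAction.stabilizer _ x, inf_le_left, fun γ hγ => hγ.2, 1, one_pos, ?_⟩
    refine Set.eq_singleton_iff_unique_mem.mpr ⟨⟨fun γ hγ => hγ.2, mem_ball_self one_pos⟩, ?_⟩
    rintro p ⟨hp, -⟩
    refine sub_eq_zero.mp (h _ fun γ hγ hγx => ?_)
    rw [rotPart_sub, hp γ ⟨hγ, hγx⟩, hγx]

namespace ReflProp

theorem apply_eq_or_eq_two_smul_sub {Γ : Subgroup (𝔼 ≃ᵢ 𝔼)} {x y : 𝔼} (hrefl : ReflProp Γ)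
    (hx : x ∈ SingSet Γ) (hy : y ∈ SS Γ x) {γ : 𝔼 ≃ᵢ 𝔼} (hγ : γ ∈ Γ) (hγx : γ x = x) :
    γ y = y ∨ γ y = (2 : ℝ) • x - y := by
  have hmem : x - γ y ∈ ({x - y, y - x} : Set 𝔼) :=
    hrefl x hx y hy ▸ ⟨γ, hγ, hγx, by rw [rotPart_sub, hγx]⟩
  rcases hmem with h | h
  · exact .inl (sub_right_inj.mp h)
  · exact .inr (by linear_combination (norm := module) -Set.mem_singleton_iff.mp h)

theorem exists_apply_eq_two_smul_sub {Γ : Subgroup (𝔼 ≃ᵢ 𝔼)} {x y : 𝔼} (hrefl : ReflProp Γ)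
    (hx : x ∈ SingSet Γ) (hy : y ∈ SS Γ x) :
    ∃ τ ∈ Γ, τ x = x ∧ τ y = (2 : ℝ) • x - y := by
  have hmem : y - x ∈ rotSet Γ x (x - y) := by
    rw [hrefl x hx y hy]
    exact .inr rfl
  obtain ⟨τ, hτ, hτx, h⟩ := hmem
  rw [rotPart_sub, hτx] at h
  exact ⟨τ, hτ, hτx, by linear_combination (norm := module) -h⟩

/-- Conjugating by `τ` shows that `u + τ^# u` is fixed by all of `Γ_x^#`, so it vanishes. -/
theorem rotPart_eq_neg {Γ : Subgroup (𝔼 ≃ᵢ 𝔼)} {x y u : 𝔼} {τ : 𝔼 ≃ᵢ 𝔼} (hrefl : ReflProp Γ)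
    (hx : x ∈ SingSet Γ) (hy : y ∈ SS Γ x)
    (hu : ∀ γ ∈ Γ, γ x = x → γ y = y → rotPart γ u = u)
    (hτ : τ ∈ Γ) (hτx : τ x = x) (hτy : τ y = (2 : ℝ) • x - y) :
    rotPart τ u = -u := by
  have hτx' : τ⁻¹ x = x := IsometryEquiv.inv_apply_eq_of_apply_eq hτx
  have hτy' : τ⁻¹ ((2 : ℝ) • x - y) = y := IsometryEquiv.inv_apply_eq_of_apply_eq hτy
  have hfix : ∀ γ ∈ Γ, γ x = x → rotPart γ (u + rotPart τ u) = u + rotPart τ u := by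
    intro γ hγ hγx
    rw [rotPart_add, ← rotPart_mul]
    rcases hrefl.apply_eq_or_eq_two_smul_sub hx hy hγ hγx with hγy | hγy
    · have hconj : rotPart (τ⁻¹ * (γ * τ)) u = u :=
        hu _ (mul_mem (inv_mem hτ) (mul_mem hγ hτ))
          (by rw [IsometryEquiv.mul_apply, IsometryEquiv.mul_apply, hτx, hγx, hτx'])
          (by rw [IsometryEquiv.mul_apply, IsometryEquiv.mul_apply, hτy,
            apply_two_smul_sub_of_apply_eq hγx, hγy, hτy'])
      rw [hu γ hγ hγx hγy, show γ * τ = τ * (τ⁻¹ * (γ * τ)) by group, rotPart_mul, hconj]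
    · have hτγ : rotPart (τ⁻¹ * γ) u = u :=
        hu _ (mul_mem (inv_mem hτ) hγ) (by rw [IsometryEquiv.mul_apply, hγx, hτx'])
          (by rw [IsometryEquiv.mul_apply, hγy, hτy'])
      have hγτ : rotPart (γ * τ) u = u :=
        hu _ (mul_mem hγ hτ) (by rw [IsometryEquiv.mul_apply, hτx, hγx])
          (by rw [IsometryEquiv.mul_apply, hτy, apply_two_smul_sub_of_apply_eq hγx, hγy]; module)
      rw [hγτ, show γ = τ * (τ⁻¹ * γ) by group, rotPart_mul, hτγ, add_comm]
  exact eq_neg_of_add_eq_zero_right (mem_singSet_iff.mp hx _ hfix)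

theorem apply_eq_two_smul_sub {Γ : Subgroup (𝔼 ≃ᵢ 𝔼)} {x y p : 𝔼} {τ : 𝔼 ≃ᵢ 𝔼}
    (hrefl : ReflProp Γ) (hx : x ∈ SingSet Γ) (hy : y ∈ SS Γ x)
    (hp : ∀ γ ∈ Γ, γ x = x → γ y = y → γ p = p)
    (hτ : τ ∈ Γ) (hτx : τ x = x) (hτy : τ y = (2 : ℝ) • x - y) :
    τ p = (2 : ℝ) • x - p := by
  have h := hrefl.rotPart_eq_neg hx hy (u := p - x)
    (fun γ hγ hγx hγy => by rw [rotPart_sub, hγx, hp γ hγ hγx hγy]) hτ hτx hτy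
  rw [rotPart_sub, hτx] at h
  linear_combination (norm := module) h

theorem affineSpan_apply_eq_self_or_eq_two_smul_sub {Γ : Subgroup (𝔼 ≃ᵢ 𝔼)} {x y z : 𝔼}
    (hrefl : ReflProp Γ) (hx : x ∈ SingSet Γ) (hy : y ∈ SS Γ x)
    (hz : ∀ γ ∈ Γ, γ x = x → γ y = y → γ z = z) {γ : 𝔼 ≃ᵢ 𝔼} (hγ : γ ∈ Γ) (hγy : γ y = y) :
    (∀ p ∈ affineSpan ℝ {x, y, z}, γ p = p) ∨
      (∀ p ∈ affineSpan ℝ {x, y, z}, γ p = (2 : ℝ) • y - p) := by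
  have hxy := mem_SS_comm hx hy
  rcases hrefl.apply_eq_or_eq_two_smul_sub hy.1 hxy hγ hγy with hγx | hγx
  · refine .inl (γ.eqOn_affineSpan (AffineMap.id ℝ 𝔼) ?_)
    simp only [Set.mem_insert_iff, Set.mem_singleton_iff, forall_eq_or_imp, forall_eq,
      AffineMap.id_apply]
    exact ⟨hγx, hγy, hz γ hγ hγx hγy⟩
  · refine .inr (γ.eqOn_affineSpan (AffineMap.const ℝ 𝔼 ((2 : ℝ) • y) - AffineMap.id ℝ 𝔼) ?_)
    simp only [Set.mem_insert_iff, Set.mem_singleton_iff, forall_eq_or_imp, forall_eq,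
      AffineMap.coe_sub, AffineMap.coe_const, AffineMap.coe_id, Pi.sub_apply,
      Function.const_apply, id_eq]
    refine ⟨hγx, by rw [hγy]; module, ?_⟩
    exact hrefl.apply_eq_two_smul_sub hy.1 hxy (fun δ hδ hδy hδx => hz δ hδ hδx hδy) hγ hγy hγx

theorem add_sub_mem_singSet {Γ : Subgroup (𝔼 ≃ᵢ 𝔼)} {x y z : 𝔼} (hrefl : ReflProp Γ)
    (hx : x ∈ SingSet Γ) (hy : y ∈ SS Γ x) (hz : z ∈ SS Γ x)
    (hyz : ∀ γ ∈ Γ, γ x = x → (γ y = y ↔ γ z = z)) :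
    y + (z - x) ∈ SingSet Γ := by
  have hxy := mem_SS_comm hx hy
  have hxz := mem_SS_comm hx hz
  obtain ⟨σ, hσ, hσy, hσx⟩ := hrefl.exists_apply_eq_two_smul_sub hy.1 hxy
  obtain ⟨ρ, hρ, hρx, hρy⟩ := hrefl.exists_apply_eq_two_smul_sub hx hy
  obtain ⟨ς, hς, hςz, hςx⟩ := hrefl.exists_apply_eq_two_smul_sub hz.1 hxz
  have hσz : σ z = (2 : ℝ) • y - z := hrefl.apply_eq_two_smul_sub hy.1 hxy
    (fun γ hγ hγy hγx => (hyz γ hγ hγx).1 hγy) hσ hσy hσx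
  have hρz : ρ z = (2 : ℝ) • x - z := hrefl.apply_eq_two_smul_sub hx hy
    (fun γ hγ hγx hγy => (hyz γ hγ hγx).1 hγy) hρ hρx hρy
  have hςy : ς y = (2 : ℝ) • z - y := hrefl.apply_eq_two_smul_sub hz.1 hxz
    (fun γ hγ hγz hγx => (hyz γ hγ hγx).2 hγz) hς hςz hςx
  have hς' : ς (y + (z - x)) = x + (z - y) := by rw [apply_add_sub, hςy, hςz, hςx]; module
  have hρ' : ρ (x + (z - y)) = x + (y - z) := by rw [apply_add_sub, hρx, hρz, hρy]; module
  have hσ' : σ (x + (y - z)) = y + (z - x) := by rw [apply_add_sub, hσx, hσy, hσz]; module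
  refine mem_singSet_iff.mpr fun v hv => ?_
  have hvxy : ∀ γ ∈ Γ, γ x = x → γ y = y → rotPart γ v = v := fun γ hγ hγx hγy =>
    hv γ hγ (by rw [apply_add_sub, hγy, (hyz γ hγ hγx).1 hγy, hγx])
  have hσv := hrefl.rotPart_eq_neg hy.1 hxy (fun γ hγ hγy hγx => hvxy γ hγ hγx hγy) hσ hσy hσx
  have hρv := hrefl.rotPart_eq_neg hx hy hvxy hρ hρx hρy
  have hςv := hrefl.rotPart_eq_neg hz.1 hxz
    (fun γ hγ hγz hγx => hvxy γ hγ hγx ((hyz γ hγ hγx).2 hγz)) hς hςz hςx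
  have hg := hv _ (mul_mem hσ (mul_mem hρ hς))
    (by rw [IsometryEquiv.mul_apply, IsometryEquiv.mul_apply, hς', hρ', hσ'])
  rw [rotPart_mul, rotPart_mul, hςv, rotPart_neg, hρv, neg_neg, hσv] at hg
  linear_combination (norm := module) (-(1 / 2 : ℝ)) • hg

end ReflProp

end

theorem fourth_point_general_general {n : ℕ}
    (Γ : Subgroup (EuclideanSpace ℝ (Fin n) ≃ᵢ EuclideanSpace ℝ (Fin n)))
    (hrefl : ReflProp Γ)
    (X Y Z : EuclideanSpace ℝ (Fin n)) (hX : X ∈ SingSet Γ)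
    (hY : Y ∈ SS Γ X) (hZ : Z ∈ SS Γ X)
    (hstab : {γ : EuclideanSpace ℝ (Fin n) ≃ᵢ EuclideanSpace ℝ (Fin n) |
        γ ∈ Γ ∧ γ X = X ∧ γ Y = Y} =
      {γ : EuclideanSpace ℝ (Fin n) ≃ᵢ EuclideanSpace ℝ (Fin n) |
        γ ∈ Γ ∧ γ X = X ∧ γ Z = Z}) :
    (∀ γ ∈ Γ, γ Y = Y →
      (∀ p ∈ affineSpan ℝ ({X, Y, Z} : Set (EuclideanSpace ℝ (Fin n))), γ p = p) ∨
      (∀ p ∈ affineSpan ℝ ({X, Y, Z} : Set (EuclideanSpace ℝ (Fin n))),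
        γ p = (2 : ℝ) • Y - p)) ∧
    Y + (Z - X) ∈ SingSet Γ := by
  have hYZ : ∀ γ ∈ Γ, γ X = X → (γ Y = Y ↔ γ Z = Z) := fun γ hγ hγX => by
    simpa [hγ, hγX] using Set.ext_iff.mp hstab γ
  refine ⟨fun γ hγ hγY => ?_, hrefl.add_sub_mem_singSet hX hY hZ hYZ⟩
  exact hrefl.affineSpan_apply_eq_self_or_eq_two_smul_sub hX hY
    (fun δ hδ hδX hδY => (hYZ δ hδ hδX).1 hδY) hγ hγY

theorem fourth_point_general {n : ℕ} (hn : 1 ≤ n)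
    (Γ : Subgroup (EuclideanSpace ℝ (Fin n) ≃ᵢ EuclideanSpace ℝ (Fin n)))
    (hdisc : ProperlyDisc Γ) (hcc : CocompactAct Γ)
    (hne : (SingSet Γ).Nonempty) (hrefl : ReflProp Γ) (hmid : MidProp Γ)
    (X Y Z : EuclideanSpace ℝ (Fin n)) (hX : X ∈ SingSet Γ)
    (hY : Y ∈ SS Γ X) (hZ : Z ∈ SS Γ X)
    (hstab : {γ : EuclideanSpace ℝ (Fin n) ≃ᵢ EuclideanSpace ℝ (Fin n) |
        γ ∈ Γ ∧ γ X = X ∧ γ Y = Y} =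
      {γ : EuclideanSpace ℝ (Fin n) ≃ᵢ EuclideanSpace ℝ (Fin n) |
        γ ∈ Γ ∧ γ X = X ∧ γ Z = Z}) :
    (∀ γ ∈ Γ, γ Y = Y →
      (∀ p ∈ affineSpan ℝ ({X, Y, Z} : Set (EuclideanSpace ℝ (Fin n))), γ p = p) ∨
      (∀ p ∈ affineSpan ℝ ({X, Y, Z} : Set (EuclideanSpace ℝ (Fin n))),
        γ p = (2 : ℝ) • Y - p)) ∧
    Y + (Z - X) ∈ SingSet Γ :=
  fourth_point_general_general Γ hrefl X Y Z hX hY hZ hstab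
end
end

section
/- Let Γ be a discrete cocompact subgroup of isometries of ℝⁿ such that ℰ is nonempty and Γ has the reflection property. Then 𝔖(X) is centrally symmetric about each X ∈ ℰ: if Y ∈ 𝔖(X), then the point 2X − Y also belongs to 𝔖(X). -/
open Metric

noncomputable section

/-!
The reflection property at `X` supplies `γ ∈ Γ` fixing `X` whose rotational part sends `X - Y`
to `Y - X`; as `γ` is affine, `γ Y = 2X - Y`. Conjugating subgroups by `γ` shows that `γ`
permutes `ℰ`, hence maps Voronoi cells to Voronoi cells; being an affine equivalence, it preserves
the dimension of the affine span of `V_X ∩ V_Y`, so `γ Y ∈ 𝔖(γ X) = 𝔖(X)`.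
-/

lemma AffineEquiv.finrank_direction_affineSpan_image {k V₁ V₂ P₁ P₂ : Type*} [Ring k]
    [AddCommGroup V₁] [Module k V₁] [AddTorsor V₁ P₁] [AddCommGroup V₂] [Module k V₂]
    [AddTorsor V₂ P₂] (f : P₁ ≃ᵃ[k] P₂) (s : Set P₁) :
    Module.finrank k (affineSpan k (f '' s)).direction =
      Module.finrank k (affineSpan k s).direction := by
  rw [← f.coe_toAffineMap, ← AffineSubspace.map_span, AffineSubspace.map_direction]
  exact f.linear.finrank_map_eq _

section Equivariance

variable {n : ℕ} {Γ : Subgroup (EuclideanSpace ℝ (Fin n) ≃ᵢ EuclideanSpace ℝ (Fin n))}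
  {γ : EuclideanSpace ℝ (Fin n) ≃ᵢ EuclideanSpace ℝ (Fin n)}

lemma rotPart_sub_s13 (γ : EuclideanSpace ℝ (Fin n) ≃ᵢ EuclideanSpace ℝ (Fin n))
    (y x : EuclideanSpace ℝ (Fin n)) : rotPart γ (y - x) = γ y - γ x := by
  rw [rotPart, ← γ.toRealLinearIsometryEquiv_apply, map_sub, γ.toRealLinearIsometryEquiv_apply,
    γ.toRealLinearIsometryEquiv_apply, sub_sub_sub_cancel_right]

lemma apply_eq_two_smul_sub_of_rotPart {x y : EuclideanSpace ℝ (Fin n)} (hx : γ x = x)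
    (h : rotPart γ (x - y) = y - x) : γ y = (2 : ℝ) • x - y := by
  rw [rotPart_sub_s13, hx] at h
  linear_combination (norm := module) -h

lemma fixSet_map_conj (γ : EuclideanSpace ℝ (Fin n) ≃ᵢ EuclideanSpace ℝ (Fin n))
    (H : Subgroup (EuclideanSpace ℝ (Fin n) ≃ᵢ EuclideanSpace ℝ (Fin n))) :
    FixSet (H.map (MulAut.conj γ).toMonoidHom) = γ '' FixSet H := by
  ext z
  constructor
  · intro hz
    refine ⟨(γ⁻¹ : _ ≃ᵢ _) z, fun h hh => ?_, γ.apply_inv_self z⟩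
    have hconj : (γ * h * γ⁻¹) z = z := hz _ (Subgroup.mem_map.mpr ⟨h, hh, rfl⟩)
    simpa [IsometryEquiv.mul_apply] using congrArg (γ⁻¹ : _ ≃ᵢ _) hconj
  · rintro ⟨w, hw, rfl⟩ g hg
    obtain ⟨h, hh, rfl⟩ := Subgroup.mem_map.mp hg
    show (γ * h * γ⁻¹) (γ w) = γ w
    simp [IsometryEquiv.mul_apply, hw h hh]

lemma apply_mem_singSet (hγ : γ ∈ Γ) {x : EuclideanSpace ℝ (Fin n)} (hx : x ∈ SingSet Γ) :
    γ x ∈ SingSet Γ := by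
  obtain ⟨H, hHΓ, hxH, ε, hε, hisolated⟩ := hx
  refine ⟨H.map (MulAut.conj γ).toMonoidHom, ?_, ?_, ε, hε, ?_⟩
  · rintro _ ⟨h, hh, rfl⟩
    exact mul_mem (mul_mem hγ (hHΓ hh)) (inv_mem hγ)
  · rw [fixSet_map_conj]
    exact Set.mem_image_of_mem γ hxH
  · rw [fixSet_map_conj, ← γ.image_ball, ← Set.image_inter γ.injective, hisolated,
      Set.image_singleton]

lemma image_singSet (hγ : γ ∈ Γ) : γ '' SingSet Γ = SingSet Γ := by
  refine Set.Subset.antisymm (Set.image_subset_iff.mpr fun x hx => apply_mem_singSet hγ hx)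
    fun y hy => ⟨γ⁻¹ y, apply_mem_singSet (inv_mem hγ) hy, γ.apply_inv_self y⟩

lemma image_vor (γ : EuclideanSpace ℝ (Fin n) ≃ᵢ EuclideanSpace ℝ (Fin n))
    (S : Set (EuclideanSpace ℝ (Fin n))) (x : EuclideanSpace ℝ (Fin n)) :
    γ '' Vor S x = Vor (γ '' S) (γ x) := by
  ext z
  constructor
  · rintro ⟨w, hw, rfl⟩ _ ⟨y, hy, rfl⟩
    rw [γ.dist_eq, γ.dist_eq]
    exact hw y hy
  · intro hz
    refine ⟨γ.symm z, fun y hy => ?_, γ.apply_symm_apply z⟩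
    have hzy := hz (γ y) ⟨y, hy, rfl⟩
    rwa [← γ.apply_symm_apply z, γ.dist_eq, γ.dist_eq] at hzy

lemma apply_mem_SS (hγ : γ ∈ Γ) {x y : EuclideanSpace ℝ (Fin n)} (hy : y ∈ SS Γ x) :
    γ y ∈ SS Γ (γ x) := by
  obtain ⟨hyE, hyx, hdim⟩ := hy
  refine ⟨apply_mem_singSet hγ hyE, γ.injective.ne hyx, ?_⟩
  rw [← image_singSet hγ, ← image_vor, ← image_vor, ← Set.image_inter γ.injective,
    ← γ.coe_toRealAffineIsometryEquiv]
  exact (γ.toRealAffineIsometryEquiv.toAffineEquiv.finrank_direction_affineSpan_image _).trans hdim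

end Equivariance

theorem SS_centrally_symmetric_general {n : ℕ}
    (Γ : Subgroup (EuclideanSpace ℝ (Fin n) ≃ᵢ EuclideanSpace ℝ (Fin n)))
    (hrefl : ReflProp Γ)
    (X Y : EuclideanSpace ℝ (Fin n)) (hX : X ∈ SingSet Γ) (hY : Y ∈ SS Γ X) :
    (2 : ℝ) • X - Y ∈ SS Γ X := by
  obtain ⟨γ, hγ, hγX, hrot⟩ : Y - X ∈ rotSet Γ X (X - Y) := by
    rw [hrefl X hX Y hY]
    exact Set.mem_insert_of_mem _ rfl
  have hγY := apply_mem_SS hγ hY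
  rwa [hγX, apply_eq_two_smul_sub_of_rotPart hγX hrot] at hγY

theorem SS_centrally_symmetric {n : ℕ} (hn : 1 ≤ n)
    (Γ : Subgroup (EuclideanSpace ℝ (Fin n) ≃ᵢ EuclideanSpace ℝ (Fin n)))
    (hdisc : ProperlyDisc Γ) (hcc : CocompactAct Γ)
    (hne : (SingSet Γ).Nonempty) (hrefl : ReflProp Γ)
    (X Y : EuclideanSpace ℝ (Fin n)) (hX : X ∈ SingSet Γ) (hY : Y ∈ SS Γ X) :
    (2 : ℝ) • X - Y ∈ SS Γ X :=
  SS_centrally_symmetric_general Γ hrefl X Y hX hY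
end
end
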